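/- arXiv:2205.13819 — 2 statements merged into one kernel-verified Lean document; each statement's English description precedes it below -/
import Mathlib

section
/- Let N be a zero-symmetric unital right near-ring. The following are equivalent: (1) N is left strongly regular; (2) N is regular and reduced; (3) N is regular and every idempotent of N is central. -/
/-- A zero-symmetric unital right near-ring: an additive group (not necessarily
abelian) and a multiplicative monoid with `1 ≠ 0`, satisfying the right
distributive law, and zero-symmetric (`x * 0 = 0`). -/
class ZSNearRing (N : Type*) extends AddGroup N, Monoid N where
  right_distrib : ∀ x y z : N, (x + y) * z = x * z + y * z
  mul_zero : ∀ x : N, x * 0 = 0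
  one_ne_zero : (1 : N) ≠ (0 : N)

namespace ZSNearRing

variable {N : Type*} [ZSNearRing N]

/-- The set `Na = {n·a : n ∈ N}`. -/
def NSet (a : N) : Set N := {x | ∃ n : N, x = n * a}

/-- The left annihilator `(0 :ₗ a) = {x ∈ N : x·a = 0}`. -/
def lAnn (a : N) : Set N := {x | x * a = 0}

/-- `a` is left morphic if there is `b` with `Na = (0 :ₗ b)` and `Nb = (0 :ₗ a)`. -/
def IsLeftMorphic (a : N) : Prop := ∃ b : N, NSet a = lAnn b ∧ NSet b = lAnn a

end ZSNearRing

open ZSNearRing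

/-! In a reduced monoid with zero, `a * b = 0` forces `b * a = 0` and `a * x * b = 0`, because
those elements square to zero. In a reduced near-ring, the defect `t = e x - e x e` of an idempotent
`e` satisfies `t e = 0`, hence `e t = 0` and `e x t = 0`, so `t² = e x t - e x e t = 0` and
`e x = e x e`; the same applied to the idempotent `1 - e` gives `x e = e x e`, so idempotents are
central. A strongly regular element, `a = x a²`, satisfies `a = xⁿ aⁿ⁺¹` and therefore is not
nilpotent unless zero, and the defect `a - a x a` is killed in the same way, so `a = a x a`.
Conversely, if `a = a x a` then `x a` is an idempotent, and if it is central
`a = a (x a) = (x a) a = x a²`. -/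

section MonoidWithZero

variable {M : Type*} [MonoidWithZero M]

theorem eq_pow_mul_pow_succ_of_eq_mul_mul_self {a x : M} (h : a = x * (a * a)) (n : ℕ) :
    a = x ^ n * a ^ (n + 1) := by
  induction n with
  | zero => simp
  | succ n ih =>
    calc a = x ^ n * (a * a ^ n) := by rw [← pow_succ']; exact ih
      _ = x ^ n * (x * (a * a) * a ^ n) := by rw [← h]
      _ = x ^ (n + 1) * a ^ (n + 1 + 1) := by
        rw [pow_succ x, pow_succ' a, pow_succ' a]; simp only [mul_assoc]

theorem isReduced_of_forall_exists_eq_mul_mul_self (h : ∀ a : M, ∃ x, a = x * (a * a)) :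
    IsReduced M where
  eq_zero a := fun ⟨n, hn⟩ => by
    obtain ⟨x, hx⟩ := h a
    rw [eq_pow_mul_pow_succ_of_eq_mul_mul_self hx n, pow_succ, hn, zero_mul,
      MulZeroClass.mul_zero]

variable [IsReduced M] {a b : M}

theorem IsReduced.eq_zero_of_mul_self_eq_zero (h : a * a = 0) : a = 0 :=
  eq_zero_of_pow_eq_zero (n := 2) (by rw [sq, h])

theorem IsReduced.mul_eq_zero_symm (h : a * b = 0) : b * a = 0 :=
  IsReduced.eq_zero_of_mul_self_eq_zero <| by
    rw [mul_assoc, ← mul_assoc a, h, zero_mul, MulZeroClass.mul_zero]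

theorem IsReduced.mul_mul_eq_zero (h : a * b = 0) (x : M) : a * x * b = 0 :=
  IsReduced.eq_zero_of_mul_self_eq_zero <| by
    rw [show a * x * b * (a * x * b) = a * x * (b * a) * (x * b) by simp only [mul_assoc],
      IsReduced.mul_eq_zero_symm h, MulZeroClass.mul_zero, zero_mul]

end MonoidWithZero

namespace ZSNearRing

variable {N : Type*} [ZSNearRing N]

/-- Kept local: as a global instance it would give `0` and `^` on a near-ring a second
elaboration path. -/
abbrev monoidWithZero : MonoidWithZero N where
  zero_mul a := left_eq_add.mp <| by
    simpa only [add_zero] using ZSNearRing.right_distrib (0 : N) 0 a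
  mul_zero := ZSNearRing.mul_zero

attribute [local instance] monoidWithZero

protected theorem neg_mul (a b : N) : -a * b = -(a * b) :=
  (neg_eq_of_add_eq_zero_right <| by
    rw [← ZSNearRing.right_distrib, add_neg_cancel, zero_mul]).symm

protected theorem sub_mul (a b c : N) : (a - b) * c = a * c - b * c := by
  rw [sub_eq_add_neg, ZSNearRing.right_distrib, ZSNearRing.neg_mul, ← sub_eq_add_neg]

theorem one_sub_mul_eq_zero {e : N} (he : IsIdempotentElem e) : (1 - e) * e = 0 := by
  rw [ZSNearRing.sub_mul, one_mul, he.eq, sub_self]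

variable [IsReduced N]

theorem eq_mul_mul_of_eq_mul_mul_self {a x : N} (h : a = x * (a * a)) : a = a * x * a := by
  set t := a - a * x * a with ht
  have hta : t * a = 0 := by
    rw [ht, ZSNearRing.sub_mul, mul_assoc (a * x), mul_assoc a x, ← h, sub_self]
  have hat : a * t = 0 := IsReduced.mul_eq_zero_symm hta
  have htt : t * t = 0 := by
    rw [ht, ZSNearRing.sub_mul, ← ht, hat, mul_assoc (a * x), hat, MulZeroClass.mul_zero,
      sub_self]
  exact sub_eq_zero.mp (IsReduced.eq_zero_of_mul_self_eq_zero htt)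

theorem idempotent_mul_eq {e : N} (he : IsIdempotentElem e) (x : N) : e * x = e * x * e := by
  set t := e * x - e * x * e with ht
  have hte : t * e = 0 := by rw [ht, ZSNearRing.sub_mul, mul_assoc (e * x), he.eq, sub_self]
  have het : e * t = 0 := IsReduced.mul_eq_zero_symm hte
  have htt : t * t = 0 := by
    rw [ht, ZSNearRing.sub_mul, ← ht, IsReduced.mul_mul_eq_zero het, mul_assoc (e * x), het,
      MulZeroClass.mul_zero, sub_self]
  exact sub_eq_zero.mp (IsReduced.eq_zero_of_mul_self_eq_zero htt)

theorem isIdempotentElem_one_sub {e : N} (he : IsIdempotentElem e) :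
    IsIdempotentElem (1 - e) := by
  have h : e * (1 - e) = 0 := by
    rw [idempotent_mul_eq he, mul_assoc, one_sub_mul_eq_zero he, MulZeroClass.mul_zero]
  rw [IsIdempotentElem, ZSNearRing.sub_mul, one_mul, h, sub_zero]

theorem mul_idempotent_eq {e : N} (he : IsIdempotentElem e) (x : N) : x * e = e * x * e := by
  have h : (1 - e) * x * e = 0 := by
    rw [idempotent_mul_eq (isIdempotentElem_one_sub he), mul_assoc _ (1 - e),
      one_sub_mul_eq_zero he, MulZeroClass.mul_zero]
  rwa [ZSNearRing.sub_mul, one_mul, ZSNearRing.sub_mul, sub_eq_zero] at h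

theorem commute_of_isIdempotentElem {e : N} (he : IsIdempotentElem e) (x : N) : Commute e x :=
  (idempotent_mul_eq he x).trans (mul_idempotent_eq he x).symm

end ZSNearRing

theorem stmt6 {N : Type*} [ZSNearRing N] :
    List.TFAE [
      ∀ a : N, ∃ x : N, a = x * (a * a),
      (∀ a : N, ∃ x : N, a = a * x * a) ∧
        (∀ a : N, ∀ n : ℕ, 1 ≤ n → a ^ n = 0 → a = 0),
      (∀ a : N, ∃ x : N, a = a * x * a) ∧
        (∀ e : N, e * e = e → ∀ x : N, e * x = x * e)] := by
  let := ZSNearRing.monoidWithZero (N := N)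
  tfae_have 1 → 2 := by
    intro h
    have := isReduced_of_forall_exists_eq_mul_mul_self h
    exact ⟨fun a => (h a).imp fun _ => eq_mul_mul_of_eq_mul_mul_self,
      fun _ _ _ => eq_zero_of_pow_eq_zero⟩
  tfae_have 2 → 3 := by
    rintro ⟨hreg, hred⟩
    have : IsReduced N := (isReduced_iff_pow_one_lt 2 one_lt_two).2 fun a => hred a 2 one_le_two
    exact ⟨hreg, fun e he => commute_of_isIdempotentElem he⟩
  tfae_have 3 → 1 := by
    rintro ⟨hreg, hcentral⟩ a
    obtain ⟨x, hx⟩ := hreg a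
    have he : x * a * (x * a) = x * a := by rw [mul_assoc, ← mul_assoc a, ← hx]
    refine ⟨x, ?_⟩
    calc a = a * (x * a) := by rw [← mul_assoc, ← hx]
      _ = x * a * a := (hcentral _ he a).symm
      _ = x * (a * a) := mul_assoc x a a
  tfae_finish
end

section
/- Let N be a zero-symmetric unital right near-ring with the insertion-of-factors property (IFP). Then the following are equivalent: (1) N is left strongly regular; (2) N is left morphic and regular; (3) N is unit-regular. -/
open ZSNearRing

section Aux

variable {N : Type*} [ZSNearRing N]

private lemma zs_rd (x y z : N) : (x + y) * z = x * z + y * z :=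
  ZSNearRing.right_distrib x y z

private lemma zs_mz (x : N) : x * (0 : N) = 0 := ZSNearRing.mul_zero x

private lemma zs_zm (x : N) : (0 : N) * x = 0 := by
  have h : ((0 : N) + 0) * x = 0 * x + 0 * x := zs_rd 0 0 x
  rw [add_zero] at h
  exact left_eq_add.mp h

private lemma zs_nm (x y : N) : (-x) * y = -(x * y) := by
  have h : (x + -x) * y = x * y + (-x) * y := zs_rd x (-x) y
  rw [add_neg_cancel, zs_zm] at h
  exact (neg_eq_of_add_eq_zero_right h.symm).symm

private lemma zs_sm (x y z : N) : (x - y) * z = x * z - y * z := by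
  rw [sub_eq_add_neg, sub_eq_add_neg, zs_rd, zs_nm]

/-- In a reduced zero-symmetric near-ring, `p*q = 0` implies `q*p = 0`. -/
private lemma zs_symm (hred : ∀ c : N, c * c = 0 → c = 0)
    {p q : N} (h : p * q = 0) : q * p = 0 := by
  apply hred
  calc q * p * (q * p) = q * (p * q * p) := by
        rw [mul_assoc, ← mul_assoc p q p]
    _ = 0 := by rw [h, zs_zm, zs_mz]

/-- In a reduced zero-symmetric near-ring with IFP, `e*n*e = e*n` for idempotent `e`. -/
private lemma zs_idem (hIFP : ∀ a b : N, a * b = 0 → ∀ n : N, a * n * b = 0)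
    (hred : ∀ c : N, c * c = 0 → c = 0)
    {e : N} (he : e * e = e) (n : N) : e * n * e = e * n := by
  set t := e * n - e * n * e with ht
  have hte : t * e = 0 := by
    rw [ht, zs_sm, mul_assoc (e*n) e e, he]
    exact sub_self _
  have het : e * t = 0 := zs_symm hred hte
  have hent : e * n * t = 0 := hIFP e t het n
  have htt : t * t = 0 := by
    rw [ht, zs_sm, hent, mul_assoc (e*n) e t, het, zs_mz]
    exact sub_self _
  have h0 : t = 0 := hred t htt
  rw [ht] at h0
  exact (sub_eq_zero.mp h0).symm

/-- From a regular element in a reduced IFP near-ring: `e = x*a` is idempotent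
with `a*e = a` and `e*a = a`. -/
private lemma zs_bundle (hIFP : ∀ a b : N, a * b = 0 → ∀ n : N, a * n * b = 0)
    (hred : ∀ c : N, c * c = 0 → c = 0)
    {a x : N} (h : a * x * a = a) :
    (x * a) * (x * a) = x * a ∧ a * (x * a) = a ∧ (x * a) * a = a := by
  have hae : a * (x * a) = a := by rw [← mul_assoc, h]
  have he : (x * a) * (x * a) = x * a := by
    rw [mul_assoc, hae]
  set e := x * a with hedef
  -- e * (1 - e) = 0
  have hge : (1 - e) * e = 0 := by rw [zs_sm, one_mul, he]; exact sub_self _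
  have heg : e * (1 - e) = 0 := by
    have := zs_idem hIFP hred he (1 - e)
    rw [mul_assoc, hge, zs_mz] at this
    exact this.symm
  -- t = (1-e)*a = a - e*a
  have het : e * ((1 - e) * a) = 0 := by rw [← mul_assoc, heg, zs_zm]
  have hte : ((1 - e) * a) * e = 0 := zs_symm hred het
  have : ((1 - e) * a) * e = (1 - e) * a := by
    rw [mul_assoc, hae]
  rw [this] at hte
  rw [zs_sm, one_mul] at hte
  have hea : e * a = a := (sub_eq_zero.mp hte).symm
  exact ⟨he, hae, hea⟩

/-- From left strong regularity of an element (plus reduced), get regularity. -/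
private lemma zs_reg_of_lsr (hred : ∀ c : N, c * c = 0 → c = 0)
    {a x : N} (h : a = x * (a * a)) : a * x * a = a := by
  have hea : (x * a) * a = a := by rw [mul_assoc]; exact h.symm
  set d := a - a * (x * a) with hd
  have hda : d * a = 0 := by
    rw [hd, zs_sm, mul_assoc (a) (x*a) a, hea]
    exact sub_self _
  have had : a * d = 0 := zs_symm hred hda
  have hed : (x * a) * d = 0 := by rw [mul_assoc, had, zs_mz]
  have hdd : d * d = 0 := by
    rw [hd, zs_sm, had, mul_assoc a (x*a) d, hed, zs_mz]
    exact sub_self _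
  have h0 : d = 0 := hred d hdd
  rw [hd] at h0
  have : a * (x * a) = a := (sub_eq_zero.mp h0).symm
  rw [← mul_assoc] at this
  exact this

end Aux

theorem stmt19 {N : Type*} [ZSNearRing N]
    (hIFP : ∀ a b : N, a * b = 0 → ∀ n : N, a * n * b = 0) :
    List.TFAE [
      ∀ a : N, ∃ x : N, a = x * (a * a),
      (∀ a : N, IsLeftMorphic a) ∧ (∀ a : N, ∃ x : N, a = a * x * a),
      ∀ a : N, ∃ u : N, (∃ v : N, u * v = 1 ∧ v * u = 1) ∧ a = a * u * a] := by
  tfae_have 1 → 2 := by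
    intro h1
    have hred : ∀ c : N, c * c = 0 → c = 0 := by
      intro c hc
      obtain ⟨x, hx⟩ := h1 c
      rw [hx, hc, zs_mz]
    constructor
    · -- left morphic
      intro a
      obtain ⟨x, hx⟩ := h1 a
      have hreg : a * x * a = a := zs_reg_of_lsr hred hx
      obtain ⟨he, hae, hea⟩ := zs_bundle hIFP hred hreg
      set e := x * a with hedef
      refine ⟨1 - e, ?_, ?_⟩
      · -- NSet a = lAnn (1 - e)
        ext y
        constructor
        · rintro ⟨n, rfl⟩
          show (n * a) * (1 - e) = 0
          have h0 : (1 - e) * a = 0 := by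
            rw [zs_sm, one_mul, hea]; exact sub_self _
          have h1' : (1 - e) * n * a = 0 := hIFP _ _ h0 n
          rw [mul_assoc] at h1'
          exact zs_symm hred h1'
        · intro hy
          have hy' : y * (1 - e) = 0 := hy
          have h2 : (1 - e) * y = 0 := zs_symm hred hy'
          rw [zs_sm, one_mul] at h2
          have hey : e * y = y := (sub_eq_zero.mp h2).symm
          have hye : y * e = y := by
            conv_lhs => rw [← hey]
            rw [zs_idem hIFP hred he y, hey]
          exact ⟨y * x, by rw [mul_assoc, ← hedef, hye]⟩
      · -- NSet (1 - e) = lAnn a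
        ext y
        constructor
        · rintro ⟨n, rfl⟩
          show (n * (1 - e)) * a = 0
          have h0 : (1 - e) * a = 0 := by
            rw [zs_sm, one_mul, hea]; exact sub_self _
          rw [mul_assoc, h0, zs_mz]
        · intro hy
          have hya : y * a = 0 := hy
          have hyxa : y * x * a = 0 := hIFP _ _ hya x
          have hye : y * e = 0 := by rw [hedef, ← mul_assoc]; exact hyxa
          have hge : (1 - e) * e = 0 := by
            rw [zs_sm, one_mul, he]; exact sub_self _
          have heg : e * (1 - e) = 0 := by
            have := zs_idem hIFP hred he (1 - e)
            rw [mul_assoc, hge, zs_mz] at this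
            exact this.symm
          have hgg : (1 - e) * (1 - e) = 1 - e := by
            rw [zs_sm, one_mul, heg, sub_zero]
          set w := y * (1 - e) - y with hw
          have hwe : w * e = 0 := by
            rw [hw, zs_sm, mul_assoc, hge, zs_mz, hye]; exact sub_self _
          have hwg : w * (1 - e) = 0 := by
            rw [hw, zs_sm, mul_assoc, hgg]; exact sub_self _
          have hgw : (1 - e) * w = 0 := zs_symm hred hwg
          rw [zs_sm, one_mul] at hgw
          have hew : e * w = 0 := zs_symm hred hwe
          rw [hew, sub_zero] at hgw
          rw [hw] at hgw
          have : y = y * (1 - e) := (sub_eq_zero.mp hgw).symm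
          exact ⟨y, this⟩
    · -- regular
      intro a
      obtain ⟨x, hx⟩ := h1 a
      exact ⟨x, (zs_reg_of_lsr hred hx).symm⟩
  tfae_have 1 → 3 := by
    intro h1
    have hred : ∀ c : N, c * c = 0 → c = 0 := by
      intro c hc
      obtain ⟨x, hx⟩ := h1 c
      rw [hx, hc, zs_mz]
    intro a
    obtain ⟨x, hx⟩ := h1 a
    have hreg : a * x * a = a := zs_reg_of_lsr hred hx
    obtain ⟨he, hae, hea⟩ := zs_bundle hIFP hred hreg
    set e := x * a with hedef
    -- e * (x*e) = x*e
    have hexe : e * (x * e) = x * e := by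
      set y := x * e - e * (x * e) with hy
      have hya : y * a = 0 := by
        rw [hy, zs_sm, mul_assoc x e a, hea, mul_assoc e (x*e) a,
          mul_assoc x e a, hea, ← hedef, he]
        exact sub_self _
      have hyxa : y * x * a = 0 := hIFP _ _ hya x
      have hye : y * e = 0 := by rw [hedef, ← mul_assoc]; exact hyxa
      have hye' : y * e = y := by
        rw [hy, zs_sm, mul_assoc x e e, he, mul_assoc e (x*e) e,
          mul_assoc x e e, he]
      rw [hye'] at hye
      rw [hy] at hye
      exact (sub_eq_zero.mp hye).symm
    -- (a*x)*e = e
    have haxe : a * x * e = e := by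
      set z := a * x * e - e with hz
      have hza : z * a = 0 := by
        rw [hz, zs_sm, mul_assoc (a*x) e a, hea, hreg]
        exact sub_self _
      have hzxa : z * x * a = 0 := hIFP _ _ hza x
      have hze : z * e = 0 := by rw [hedef, ← mul_assoc]; exact hzxa
      have hze' : z * e = z := by
        rw [hz, zs_sm, mul_assoc (a*x) e e, he]
      rw [hze'] at hze
      rw [hz] at hze
      exact sub_eq_zero.mp hze
    set u := 1 - e + x * e with hu
    set v := 1 - e + a with hv
    -- products of sums with single elements on the right
    have hge : (1 - e) * e = 0 := by rw [zs_sm, one_mul, he]; exact sub_self _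
    have hga : (1 - e) * a = 0 := by rw [zs_sm, one_mul, hea]; exact sub_self _
    have hue : u * e = x * e := by
      rw [hu, zs_rd, hge, zero_add, mul_assoc, he]
    have hve : v * e = a := by
      rw [hv, zs_rd, hge, zero_add, hae]
    have heu : e * u = x * e := by
      have := zs_idem hIFP hred he u
      rw [mul_assoc, hue, hexe] at this
      exact this.symm
    have hev : e * v = a := by
      have := zs_idem hIFP hred he v
      rw [mul_assoc, hve, hea] at this
      exact this.symm
    have hau : a * u = e := by
      calc a * u = a * (e * u) := by rw [← mul_assoc, hae]
        _ = a * (x * e) := by rw [heu]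
        _ = e := by rw [← mul_assoc]; exact haxe
    have huv : u * v = 1 := by
      rw [hu, zs_rd, zs_sm, one_mul, hev, mul_assoc, hev, ← hedef, hedef]
      rw [hv]
      -- (1 - e + a - a) + x * a = 1
      have : (1 : N) - e + a - a = 1 - e := by rw [add_sub_cancel_right]
      rw [this, ← hedef]
      exact sub_add_cancel 1 e
    have hvu : v * u = 1 := by
      rw [hv, zs_rd, zs_sm, one_mul, heu, hau]
      have : u - x * e = 1 - e := by rw [hu, add_sub_cancel_right]
      rw [this]
      exact sub_add_cancel 1 e
    have hua : u * a = e := by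
      rw [hu, zs_rd, hga, zero_add, mul_assoc, hea]
    refine ⟨u, ⟨v, huv, hvu⟩, ?_⟩
    rw [mul_assoc, hua, hae]
  tfae_have 2 → 1 := by
    rintro ⟨-, hreg⟩
    have hred : ∀ c : N, c * c = 0 → c = 0 := by
      intro c hc
      obtain ⟨x, hx⟩ := hreg c
      rw [hx]
      exact hIFP c c hc x
    intro a
    obtain ⟨x, hx⟩ := hreg a
    obtain ⟨he, hae, hea⟩ := zs_bundle hIFP hred hx.symm
    exact ⟨x, by rw [← mul_assoc]; exact hea.symm⟩
  tfae_have 3 → 1 := by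
    intro h3
    have hred : ∀ c : N, c * c = 0 → c = 0 := by
      intro c hc
      obtain ⟨u, -, hu⟩ := h3 c
      rw [hu]
      exact hIFP c c hc u
    intro a
    obtain ⟨u, -, hu⟩ := h3 a
    obtain ⟨he, hae, hea⟩ := zs_bundle hIFP hred hu.symm
    exact ⟨u, by rw [← mul_assoc]; exact hea.symm⟩
  tfae_finish
end
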